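/- arXiv:1708.08671 — 3 statements merged into one kernel-verified Lean document; each statement's English description precedes it below -/
import Mathlib

section
/- For all μ > 0, λ > 0 and x > 0, ∫₀ˣ (λ^{1/2}/√(2π)) z^{−3/2} E(z;μ,λ) dz = Φ(√(λ/x)·(x/μ − 1)) + exp(2λ/μ)·Φ(−√(λ/x)·(x/μ + 1)). (This is the cumulative distribution function of the inverse Gaussian distribution, i.e. the generalized inverse Gaussian distribution with p = −1/2.) -/
open MeasureTheory Real Filter Set Topology

/-- Standard normal cumulative distribution function. -/
noncomputable def stdNormalCDF (x : ℝ) : ℝ :=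
  ∫ t in Set.Iic x, (Real.sqrt (2 * Real.pi))⁻¹ * Real.exp (-t ^ 2 / 2)

/-- The exponential factor `E(z; μ, λ) = exp(−λ(z−μ)²/(2μ²z))`. -/
noncomputable def gigE (z μ lam : ℝ) : ℝ :=
  Real.exp (-(lam * (z - μ) ^ 2) / (2 * μ ^ 2 * z))

/-!
The closed form `F` on the right-hand side is an antiderivative of the density on `(0, ∞)`.
Writing `u z = √(λ/z) (z/μ - 1)` and `v z = -√(λ/z) (z/μ + 1)`, one has `v² - u² = 4λ/μ`, so
the factor `exp (2λ/μ)` turns `φ (v z)` into `φ (u z)`, while `u + v = -2 √λ z^(-1/2)`; hence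
`F' z = φ (u z) (u' z + v' z) = √λ z^(-3/2) φ (u z)`, and `φ (u z) √(2π)` is exactly
`E(z; μ, λ)`. As `z → 0⁺` both `u z` and `v z` tend to `-∞`, so `F z → 0`, and since the
density is nonnegative it is integrable near `0`, so the fundamental theorem of calculus applies
on all of `(0, x]`.
-/

section FTC

variable {F f : ℝ → ℝ} {a b L : ℝ}

theorem intervalIntegrable_deriv_of_nonneg_of_tendsto (hab : a ≤ b)
    (hderiv : ∀ x ∈ Ioc a b, HasDerivAt F (f x) x) (hf : ∀ x ∈ Ioo a b, 0 ≤ f x)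
    (ha : Tendsto F (𝓝[>] a) (𝓝 L)) : IntervalIntegrable f volume a b := by
  classical
  have hcont : ContinuousOn (Function.update F a L) (uIcc a b) := by
    rw [uIcc_of_le hab, continuousOn_update_iff, Icc_sdiff_left]
    exact ⟨fun x hx => (hderiv x hx).continuousAt.continuousWithinAt,
      fun _ => ha.mono_left (nhdsWithin_mono _ Ioc_subset_Ioi_self)⟩
  refine intervalIntegral.intervalIntegrable_deriv_of_nonneg hcont (fun x hx => ?_)
    (by rwa [min_eq_left hab, max_eq_right hab])
  rw [min_eq_left hab, max_eq_right hab] at hx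
  refine (hderiv x (Ioo_subset_Ioc_self hx)).congr_of_eventuallyEq ?_
  filter_upwards [Ioi_mem_nhds hx.1] with y hy using Function.update_of_ne hy.ne' _ _

theorem integral_eq_sub_of_hasDerivAt_of_tendsto_of_nonneg (hab : a < b)
    (hderiv : ∀ x ∈ Ioc a b, HasDerivAt F (f x) x) (hf : ∀ x ∈ Ioo a b, 0 ≤ f x)
    (ha : Tendsto F (𝓝[>] a) (𝓝 L)) : ∫ x in a..b, f x = F b - L :=
  intervalIntegral.integral_eq_sub_of_hasDerivAt_of_tendsto hab
    (fun x hx => hderiv x (Ioo_subset_Ioc_self hx))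
    (intervalIntegrable_deriv_of_nonneg_of_tendsto hab.le hderiv hf ha) ha
    ((hderiv b (right_mem_Ioc.2 hab)).continuousAt.tendsto.mono_left nhdsWithin_le_nhds)

end FTC

noncomputable def stdNormalPDF (t : ℝ) : ℝ :=
  (√(2 * π))⁻¹ * exp (-t ^ 2 / 2)

theorem continuous_stdNormalPDF : Continuous stdNormalPDF := by
  unfold stdNormalPDF
  fun_prop

theorem integrable_stdNormalPDF : Integrable stdNormalPDF := by
  convert (integrable_exp_neg_mul_sq (b := 1 / 2) (by norm_num)).const_mul (√(2 * π))⁻¹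
    using 2
  unfold stdNormalPDF
  ring_nf

theorem stdNormalPDF_eq_exp_mul (a b : ℝ) :
    stdNormalPDF a = exp ((b ^ 2 - a ^ 2) / 2) * stdNormalPDF b := by
  unfold stdNormalPDF
  rw [mul_left_comm, ← exp_add]
  ring_nf

theorem stdNormalCDF_sub_stdNormalCDF (x y : ℝ) :
    stdNormalCDF y - stdNormalCDF x = ∫ t in x..y, stdNormalPDF t :=
  intervalIntegral.integral_Iic_sub_Iic integrable_stdNormalPDF.integrableOn
    integrable_stdNormalPDF.integrableOn

theorem hasDerivAt_stdNormalCDF (x : ℝ) : HasDerivAt stdNormalCDF (stdNormalPDF x) x := by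
  have h : HasDerivAt (fun y => stdNormalCDF 0 + ∫ t in (0 : ℝ)..y, stdNormalPDF t)
      (stdNormalPDF x) x :=
    (intervalIntegral.integral_hasDerivAt_right integrable_stdNormalPDF.intervalIntegrable
      (continuous_stdNormalPDF.stronglyMeasurableAtFilter _ _)
      continuous_stdNormalPDF.continuousAt).const_add _
  refine h.congr_of_eventuallyEq (Eventually.of_forall fun y => ?_)
  dsimp only
  rw [← stdNormalCDF_sub_stdNormalCDF]
  ring

theorem tendsto_stdNormalCDF_atBot : Tendsto stdNormalCDF atBot (𝓝 0) := by
  have h : Tendsto (fun y => stdNormalCDF 0 - ∫ t in y..0, stdNormalPDF t) atBot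
      (𝓝 (stdNormalCDF 0 - stdNormalCDF 0)) :=
    tendsto_const_nhds.sub
      (intervalIntegral_tendsto_integral_Iic 0 integrable_stdNormalPDF.integrableOn tendsto_id)
  rw [sub_self] at h
  refine h.congr fun y => ?_
  rw [← stdNormalCDF_sub_stdNormalCDF]
  ring

noncomputable def invGaussianPDF (μ lam z : ℝ) : ℝ :=
  √lam / √(2 * π) * z ^ (-(3:ℝ) / 2) * gigE z μ lam

noncomputable def invGaussianCDF (μ lam x : ℝ) : ℝ :=
  stdNormalCDF (√(lam / x) * (x / μ - 1))
    + exp (2 * lam / μ) * stdNormalCDF (-√(lam / x) * (x / μ + 1))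

theorem gigE_eq_exp {μ lam z : ℝ} (hμ : μ ≠ 0) (hlam : 0 ≤ lam) (hz : 0 < z) :
    gigE z μ lam = exp (-(√(lam / z) * (z / μ - 1)) ^ 2 / 2) := by
  rw [gigE, mul_pow, sq_sqrt (div_nonneg hlam hz.le)]
  congr 1
  field_simp

theorem hasDerivAt_sqrt_div_mul_add (c μ k : ℝ) {z : ℝ} (hz : 0 < z) :
    HasDerivAt (fun z => √(c / z) * (z / μ + k))
      (√c * (z ^ (-(1:ℝ) / 2) / (2 * μ) - k * z ^ (-(3:ℝ) / 2) / 2)) z := by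
  have hrepr : (fun y => √(c / y) * (y / μ + k))
      =ᶠ[𝓝 z] fun y => √c * (y ^ (1 / 2 : ℝ) / μ + k * y ^ (-(1:ℝ) / 2)) := by
    filter_upwards [Ioi_mem_nhds hz] with y hy
    have hsq : (√y) ^ 2 = y := sq_sqrt hy.le
    have hy0 : √y ≠ 0 := (sqrt_pos.2 hy).ne'
    rw [sqrt_div' c hy.le, show -(1:ℝ) / 2 = -(1 / 2) by ring, rpow_neg hy.le,
      ← sqrt_eq_rpow]
    field_simp
    rw [hsq]
  have hd := (((hasDerivAt_rpow_const (p := 1 / 2) (Or.inl hz.ne')).div_const μ).add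
    ((hasDerivAt_rpow_const (p := -(1:ℝ) / 2) (Or.inl hz.ne')).const_mul k)).const_mul √c
  refine (hd.congr_of_eventuallyEq hrepr).congr_deriv ?_
  rw [show (1:ℝ) / 2 - 1 = -1 / 2 by norm_num, show -(1:ℝ) / 2 - 1 = -3 / 2 by norm_num]
  ring

theorem hasDerivAt_invGaussianCDF {μ lam z : ℝ} (hμ : μ ≠ 0) (hlam : 0 ≤ lam) (hz : 0 < z) :
    HasDerivAt (invGaussianCDF μ lam) (invGaussianPDF μ lam z) z := by
  set u := √(lam / z) * (z / μ - 1)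
  set v := -√(lam / z) * (z / μ + 1)
  set du := √lam * (z ^ (-(1:ℝ) / 2) / (2 * μ) + z ^ (-(3:ℝ) / 2) / 2)
  set dv := -√lam * (z ^ (-(1:ℝ) / 2) / (2 * μ) - z ^ (-(3:ℝ) / 2) / 2)
  have hu : HasDerivAt (fun y => √(lam / y) * (y / μ - 1)) du z :=
    ((hasDerivAt_sqrt_div_mul_add lam μ (-1) hz).congr_of_eventuallyEq
      (Eventually.of_forall fun y => by simp only [sub_eq_add_neg])).congr_deriv (by ring)
  have hv : HasDerivAt (fun y => -√(lam / y) * (y / μ + 1)) dv z :=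
    ((hasDerivAt_sqrt_div_mul_add lam μ 1 hz).neg.congr_of_eventuallyEq
      (Eventually.of_forall fun y => neg_mul _ _)).congr_deriv (by ring)
  have hs : √(lam / z) ^ 2 = lam / z := sq_sqrt (div_nonneg hlam hz.le)
  have htilt : exp (2 * lam / μ) * stdNormalPDF v = stdNormalPDF u := by
    rw [stdNormalPDF_eq_exp_mul u v]
    congr 2
    rw [show v ^ 2 - u ^ 2 = √(lam / z) ^ 2 * (4 * z / μ) by ring, hs]
    field_simp
    ring
  have hpdf : stdNormalPDF u = (√(2 * π))⁻¹ * gigE z μ lam := by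
    rw [gigE_eq_exp hμ hlam hz, stdNormalPDF]
  refine (((hasDerivAt_stdNormalCDF u).comp z hu).add
    (((hasDerivAt_stdNormalCDF v).comp z hv).const_mul (exp (2 * lam / μ)))).congr_deriv ?_
  rw [invGaussianPDF]
  linear_combination dv * htilt + √lam * z ^ (-(3:ℝ) / 2) * hpdf

theorem tendsto_sqrt_div_nhdsGT_zero {c : ℝ} (hc : 0 < c) :
    Tendsto (fun z => √(c / z)) (𝓝[>] 0) atTop :=
  tendsto_sqrt_atTop.comp <|
    (tendsto_inv_nhdsGT_zero.const_mul_atTop hc).congr fun z => (div_eq_mul_inv c z).symm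

theorem tendsto_invGaussianCDF_nhdsGT_zero (μ : ℝ) {lam : ℝ} (hlam : 0 < lam) :
    Tendsto (invGaussianCDF μ lam) (𝓝[>] 0) (𝓝 0) := by
  have hlin (k : ℝ) : Tendsto (fun z => z / μ + k) (𝓝[>] 0) (𝓝 k) := by
    simpa using (((continuous_id.div_const μ).add_const k).tendsto 0).mono_left nhdsWithin_le_nhds
  have hu : Tendsto (fun z => √(lam / z) * (z / μ - 1)) (𝓝[>] 0) atBot := by
    simpa only [← sub_eq_add_neg] using
      (tendsto_sqrt_div_nhdsGT_zero hlam).atTop_mul_neg neg_one_lt_zero (hlin (-1))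
  have hv : Tendsto (fun z => -√(lam / z) * (z / μ + 1)) (𝓝[>] 0) atBot :=
    (tendsto_neg_atTop_atBot.comp ((tendsto_sqrt_div_nhdsGT_zero hlam).atTop_mul_pos
      one_pos (hlin 1))).congr fun z => (neg_mul _ _).symm
  have h := (tendsto_stdNormalCDF_atBot.comp hu).add
    ((tendsto_stdNormalCDF_atBot.comp hv).const_mul (exp (2 * lam / μ)))
  rw [mul_zero, add_zero] at h
  exact h

/-- C.d.f. of the inverse Gaussian distribution (generalized inverse Gaussian with `p = −1/2`). -/
theorem gig_cdf_neg_half (μ lam x : ℝ) (hμ : 0 < μ) (hlam : 0 < lam) (hx : 0 < x) :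
    (∫ z in (0:ℝ)..x,
        Real.sqrt lam / Real.sqrt (2 * Real.pi) * z ^ (-(3:ℝ)/2) * gigE z μ lam)
      = stdNormalCDF (Real.sqrt (lam / x) * (x / μ - 1))
        + Real.exp (2 * lam / μ) * stdNormalCDF (-(Real.sqrt (lam / x)) * (x / μ + 1)) := by
  have hnonneg : ∀ z ∈ Ioo 0 x, 0 ≤ invGaussianPDF μ lam z := fun z hz => by
    have hz0 : 0 < z := hz.1
    unfold invGaussianPDF gigE
    positivity
  exact (integral_eq_sub_of_hasDerivAt_of_tendsto_of_nonneg hx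
    (fun z hz => hasDerivAt_invGaussianCDF hμ.ne' hlam.le hz.1) hnonneg
    (tendsto_invGaussianCDF_nhdsGT_zero μ hlam)).trans (sub_zero _)
end

section
/- For every c > 0 (including c = 1/M), I_M := ∫₀^{X−1} (1+x)^{−1} φ_{cM(1+x), c²D²(1+x)/(u+cv)}(x) dx = [Φ(A(x)) + exp(2λ(1−cM)) · Φ(B(x))] evaluated from x = 1 to x = X, i.e. equals (Φ(A(X)) + e^{2λ(1−cM)}Φ(B(X))) − (Φ(A(1)) + e^{2λ(1−cM)}Φ(B(1))). -/
open MeasureTheory Real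

/-- P.d.f. of the normal distribution with mean `m` and variance `s2`. -/
noncomputable def normalPdf (m s2 x : ℝ) : ℝ :=
  (Real.sqrt (2 * Real.pi * s2))⁻¹ * Real.exp (-(x - m) ^ 2 / (2 * s2))

/-- `A(x) = (√(u+cv)/(cD√x))·(x(1−cM) − 1)`. -/
noncomputable def Afun (u c v M D x : ℝ) : ℝ :=
  Real.sqrt (u + c * v) / (c * D * Real.sqrt x) * (x * (1 - c * M) - 1)

/-- `B(x) = −(√(u+cv)/(cD√x))·(1 + x(1−cM))`. -/
noncomputable def Bfun (u c v M D x : ℝ) : ℝ :=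
  -(Real.sqrt (u + c * v) / (c * D * Real.sqrt x)) * (1 + x * (1 - c * M))

/-!
After the shift `s = 1 + x` the integrand is the inverse Gaussian density
`√(λ / (2π s³)) exp (-λ (κ s - 1)² / (2 s))` with `κ = 1 - cM`, and the bracket is its
classical closed-form antiderivative `Φ(A(s)) + e^{2λκ} Φ(B(s))`. On differentiating, the two
`Φ`-terms carry the same Gaussian factor, because `B² - A² = 4λκ` is exactly compensated by
`e^{2λκ}`, while the inner derivatives add up to `√λ s^{-3/2}`. The fundamental theorem of
calculus on `[1, X]` concludes.
-/

open Set

theorem hasDerivAt_integral_Iic {E : Type*} [NormedAddCommGroup E] [NormedSpace ℝ E]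
    [CompleteSpace E] {f : ℝ → E} (hf : Integrable f) (hcont : Continuous f) (x : ℝ) :
    HasDerivAt (fun y => ∫ t in Iic y, f t) (f x) x := by
  have hsplit : (fun y => ∫ t in Iic y, f t)
      = fun y => (∫ t in Iic 0, f t) + ∫ t in (0 : ℝ)..y, f t :=
    funext fun y => by
      rw [← intervalIntegral.integral_Iic_sub_Iic hf.integrableOn hf.integrableOn, add_sub_cancel]
  rw [hsplit]
  exact (intervalIntegral.integral_hasDerivAt_right hf.intervalIntegrable
    hcont.aestronglyMeasurable.stronglyMeasurableAtFilter hcont.continuousAt).const_add _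

theorem hasDerivAt_stdNormalCDF_s8 (x : ℝ) :
    HasDerivAt stdNormalCDF ((√(2 * π))⁻¹ * exp (-x ^ 2 / 2)) x := by
  have hint : Integrable fun t : ℝ => (√(2 * π))⁻¹ * exp (-t ^ 2 / 2) := by
    refine ((integrable_exp_neg_mul_sq one_half_pos).const_mul (√(2 * π))⁻¹).congr
      (.of_forall fun t => ?_)
    ring_nf
  exact hasDerivAt_integral_Iic hint (by fun_prop) x

theorem hasDerivAt_stdNormalCDF_comp_add_exp_mul {A B : ℝ → ℝ} {A' B' k s : ℝ}
    (hA : HasDerivAt A A' s) (hB : HasDerivAt B B' s) (hAB : k - B s ^ 2 / 2 = -A s ^ 2 / 2) :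
    HasDerivAt (fun s => stdNormalCDF (A s) + exp k * stdNormalCDF (B s))
      ((√(2 * π))⁻¹ * exp (-A s ^ 2 / 2) * (A' + B')) s := by
  refine (((hasDerivAt_stdNormalCDF_s8 _).comp s hA).add
    (((hasDerivAt_stdNormalCDF_s8 _).comp s hB).const_mul (exp k))).congr_deriv ?_
  rw [← hAB, sub_eq_add_neg, exp_add, neg_div]
  ring

noncomputable def invGaussCDF (a κ s : ℝ) : ℝ :=
  stdNormalCDF (√a / √s * (s * κ - 1))
    + exp (2 * a * κ) * stdNormalCDF (-(√a / √s) * (1 + s * κ))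

noncomputable def invGaussPdf (a κ s : ℝ) : ℝ :=
  √(a / (2 * π * s ^ 3)) * exp (-a * (s * κ - 1) ^ 2 / (2 * s))

theorem hasDerivAt_div_sqrt_mul (r κ ε : ℝ) {s : ℝ} (hs : 0 < s) :
    HasDerivAt (fun s => r / √s * (s * κ + ε)) (r * (s * κ - ε) / (2 * s * √s)) s := by
  have hw : 0 < √s := Real.sqrt_pos.2 hs
  refine ((((Real.hasDerivAt_sqrt hs.ne').inv hw.ne').const_mul r).mul
    (((hasDerivAt_id s).mul_const κ).add_const ε)).congr_deriv ?_
  simp only [id, Pi.inv_apply]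
  field_simp
  rw [Real.sq_sqrt hs.le]
  ring

theorem hasDerivAt_invGaussCDF {a : ℝ} (κ : ℝ) (ha : 0 ≤ a) {s : ℝ} (hs : 0 < s) :
    HasDerivAt (invGaussCDF a κ) (invGaussPdf a κ s) s := by
  have hsq : (√a / √s) ^ 2 = a / s := by rw [div_pow, Real.sq_sqrt ha, Real.sq_sqrt hs.le]
  have hAB : 2 * a * κ - (-(√a / √s) * (1 + s * κ)) ^ 2 / 2
      = -(√a / √s * (s * κ - 1)) ^ 2 / 2 := by
    rw [mul_pow, mul_pow, neg_sq, hsq]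
    field_simp
    ring
  have hA : HasDerivAt (fun s => √a / √s * (s * κ - 1)) _ s :=
    (hasDerivAt_div_sqrt_mul (√a) κ (-1) hs).congr_of_eventuallyEq (.of_forall fun _ => by ring)
  have hB : HasDerivAt (fun s => -(√a / √s) * (1 + s * κ)) _ s :=
    (hasDerivAt_div_sqrt_mul (-√a) κ 1 hs).congr_of_eventuallyEq (.of_forall fun _ => by ring)
  have hpdf : invGaussPdf a κ s
      = (√(2 * π))⁻¹ * exp (-(√a / √s * (s * κ - 1)) ^ 2 / 2) * (√a / (s * √s)) := by
    have h2π : 2 * π * s ^ 3 = (√(2 * π) * (s * √s)) ^ 2 := by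
      rw [mul_pow, mul_pow, Real.sq_sqrt (by positivity), Real.sq_sqrt hs.le]
      ring
    rw [invGaussPdf, mul_pow, hsq, h2π, Real.sqrt_div' _ (sq_nonneg _),
      Real.sqrt_sq (by positivity)]
    field_simp
  refine (hasDerivAt_stdNormalCDF_comp_add_exp_mul hA hB hAB).congr_deriv ?_
  rw [hpdf]
  field_simp
  ring

theorem continuousOn_invGaussPdf (a κ : ℝ) : ContinuousOn (invGaussPdf a κ) (Ioi 0) := by
  intro s (hs : 0 < s)
  unfold invGaussPdf
  fun_prop (disch := positivity)

theorem integral_invGaussPdf {a : ℝ} (κ : ℝ) (ha : 0 ≤ a) {s₁ s₂ : ℝ}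
    (h₁ : 0 < s₁) (h₂ : 0 < s₂) :
    ∫ s in s₁..s₂, invGaussPdf a κ s = invGaussCDF a κ s₂ - invGaussCDF a κ s₁ := by
  have hpos : uIcc s₁ s₂ ⊆ Ioi 0 := fun s hs => lt_of_lt_of_le (lt_min h₁ h₂) hs.1
  exact intervalIntegral.integral_eq_sub_of_hasDerivAt
    (fun s hs => hasDerivAt_invGaussCDF κ ha (hpos hs))
    ((continuousOn_invGaussPdf a κ).mono hpos).intervalIntegrable

theorem inv_mul_normalPdf_eq_invGaussPdf {a : ℝ} (κ : ℝ) (ha : 0 < a) {s : ℝ} (hs : 0 < s) :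
    s⁻¹ * normalPdf ((1 - κ) * s) (s / a) (s - 1) = invGaussPdf a κ s := by
  have hroot : a / (2 * π * s ^ 3) = ((s * √(2 * π * (s / a)))⁻¹) ^ 2 := by
    rw [inv_pow, mul_pow, Real.sq_sqrt (by positivity)]
    field_simp
  have hexp : -(s - 1 - (1 - κ) * s) ^ 2 / (2 * (s / a)) = -a * (s * κ - 1) ^ 2 / (2 * s) := by
    field_simp
    ring
  rw [normalPdf, invGaussPdf, hroot, Real.sqrt_sq (by positivity), hexp]
  ring

theorem stdNormalCDF_Afun_add_exp_mul {u c v M D : ℝ} (hcD : 0 ≤ c * D) (s : ℝ) :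
    stdNormalCDF (Afun u c v M D s)
        + exp (2 * ((u + c * v) / (c ^ 2 * D ^ 2)) * (1 - c * M)) * stdNormalCDF (Bfun u c v M D s)
      = invGaussCDF ((u + c * v) / (c ^ 2 * D ^ 2)) (1 - c * M) s := by
  have hroot : √(u + c * v) / (c * D * √s) = √((u + c * v) / (c ^ 2 * D ^ 2)) / √s := by
    rw [← mul_pow, Real.sqrt_div' _ (sq_nonneg _), Real.sqrt_sq hcD, div_div]
  simp only [Afun, Bfun, invGaussCDF, hroot]

theorem IM_eq_general (u c v t M D : ℝ)
    (hu : 0 < u) (hc : 0 < c) (hv : 0 ≤ v) (ht : v < t) (hD : 0 < D) :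
    (∫ x in (0:ℝ)..(c * (t - v) / (u + c * v)),
        (1 + x)⁻¹ *
          normalPdf (c * M * (1 + x)) (c ^ 2 * D ^ 2 * (1 + x) / (u + c * v)) x)
      = (stdNormalCDF (Afun u c v M D (c * (t - v) / (u + c * v) + 1))
            + Real.exp (2 * ((u + c * v) / (c ^ 2 * D ^ 2)) * (1 - c * M))
                * stdNormalCDF (Bfun u c v M D (c * (t - v) / (u + c * v) + 1)))
        - (stdNormalCDF (Afun u c v M D 1)
            + Real.exp (2 * ((u + c * v) / (c ^ 2 * D ^ 2)) * (1 - c * M))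
                * stdNormalCDF (Bfun u c v M D 1)) := by
  have hU : 0 < u + c * v := by positivity
  have hX : 0 ≤ c * (t - v) / (u + c * v) := div_nonneg (mul_nonneg hc.le (by linarith)) hU.le
  have hcD : 0 ≤ c * D := by positivity
  set a := (u + c * v) / (c ^ 2 * D ^ 2) with ha_def
  have ha : 0 < a := by positivity
  calc _ = ∫ x in (0 : ℝ)..(c * (t - v) / (u + c * v)), invGaussPdf a (1 - c * M) (1 + x) := by
        refine intervalIntegral.integral_congr fun x hx => ?_
        have hs : 0 < 1 + x := by linarith [(uIcc_of_le hX ▸ hx).1]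
        rw [← inv_mul_normalPdf_eq_invGaussPdf _ ha hs]
        congr 2
        · ring
        · rw [ha_def]; field_simp
        · ring
    _ = ∫ s in (1 : ℝ)..(c * (t - v) / (u + c * v) + 1), invGaussPdf a (1 - c * M) s := by
        rw [intervalIntegral.integral_comp_add_left, add_zero, add_comm]
    _ = _ := by
        rw [integral_invGaussPdf _ ha.le one_pos (by linarith), stdNormalCDF_Afun_add_exp_mul hcD,
          stdNormalCDF_Afun_add_exp_mul hcD]

/-- Explicit expression for `I_M` for every `c > 0`. -/
theorem IM_eq (u c v t M D : ℝ)
    (hu : 0 < u) (hc : 0 < c) (hv : 0 ≤ v) (ht : v < t) (hM : 0 < M) (hD : 0 < D) :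
    (∫ x in (0:ℝ)..(c * (t - v) / (u + c * v)),
        (1 + x)⁻¹ *
          normalPdf (c * M * (1 + x)) (c ^ 2 * D ^ 2 * (1 + x) / (u + c * v)) x)
      = (stdNormalCDF (Afun u c v M D (c * (t - v) / (u + c * v) + 1))
            + Real.exp (2 * ((u + c * v) / (c ^ 2 * D ^ 2)) * (1 - c * M))
                * stdNormalCDF (Bfun u c v M D (c * (t - v) / (u + c * v) + 1)))
        - (stdNormalCDF (Afun u c v M D 1)
            + Real.exp (2 * ((u + c * v) / (c ^ 2 * D ^ 2)) * (1 - c * M))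
                * stdNormalCDF (Bfun u c v M D 1)) :=
  IM_eq_general u c v t M D hu hc hv ht hD
end

section
/- Let 0 < A < B, q > 0 and r > 0 with √r ≤ A. Then ∫_A^B y^{−2} exp(−q(y² + r²y^{−2})) dy = 2e^{2qr} ∫_{A + r/A}^{B + r/B} e^{−qu²} (u + √(u² − 4r))^{−2} du + 2e^{−2qr} ∫_{A − r/A}^{B − r/B} e^{−qx²} (√(x² + 4r) + x)^{−2} dx. (Binet's integral identity, obtained from the substitutions u = y + r/y and x = y − r/y.) -/
open MeasureTheory Real

/-! Put `u = y + r/y` and `x = y - r/y`. For `y ≥ √r` one has `√(u² - 4r) = y - r/y` and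
`√(x² + 4r) = y + r/y`, so both denominators become `(2y)²`, while
`u² - 2r = x² + 2r = y² + r²/y²` turns both Gaussians into `exp(-q(y² + r²/y²))`.
The Jacobians `1 - r/y²` and `1 + r/y²` add up to `2`, so the two substituted integrals
sum to the left-hand side. -/

section Substitution

variable {A B r y : ℝ}

theorem pos_of_mem_uIcc (hA : 0 < A) (hB : 0 < B) (hy : y ∈ Set.uIcc A B) : 0 < y :=
  (lt_min hA hB).trans_le hy.1

theorem hasDerivAt_add_div (r : ℝ) (hy : y ≠ 0) :
    HasDerivAt (fun y => y + r / y) (1 - r / y ^ 2) y := by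
  simpa [div_eq_mul_inv, sub_eq_add_neg] using
    (hasDerivAt_id' y).fun_add ((hasDerivAt_inv hy).const_mul r)

theorem hasDerivAt_sub_div (r : ℝ) (hy : y ≠ 0) :
    HasDerivAt (fun y => y - r / y) (1 + r / y ^ 2) y := by
  simpa [div_eq_mul_inv] using (hasDerivAt_id' y).fun_sub ((hasDerivAt_inv hy).const_mul r)

theorem intervalIntegral.integral_comp_add_div_mul {g : ℝ → ℝ} (hA : 0 < A) (hB : 0 < B)
    (hr : 0 ≤ r) (hg : ContinuousOn g (Set.Ioi 0)) :
    ∫ y in A..B, g (y + r / y) * (1 - r / y ^ 2) = ∫ u in (A + r / A)..(B + r / B), g u := by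
  have hpos : ∀ y ∈ Set.uIcc A B, 0 < y := fun y hy => pos_of_mem_uIcc hA hB hy
  refine intervalIntegral.integral_comp_mul_deriv' (f := fun y => y + r / y)
    (fun y hy => hasDerivAt_add_div r (hpos y hy).ne') ?_ (hg.mono ?_)
  · fun_prop (disch := exact fun y hy => (pow_pos (hpos y hy) 2).ne')
  · rintro _ ⟨y, hy, rfl⟩
    have := hpos y hy
    exact add_pos_of_pos_of_nonneg this (div_nonneg hr this.le)

theorem intervalIntegral.integral_comp_sub_div_mul {g : ℝ → ℝ} (hA : 0 < A) (hB : 0 < B)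
    (hg : Continuous g) :
    ∫ y in A..B, g (y - r / y) * (1 + r / y ^ 2) = ∫ x in (A - r / A)..(B - r / B), g x := by
  have hpos : ∀ y ∈ Set.uIcc A B, 0 < y := fun y hy => pos_of_mem_uIcc hA hB hy
  refine intervalIntegral.integral_comp_mul_deriv (f := fun y => y - r / y)
    (fun y hy => hasDerivAt_sub_div r (hpos y hy).ne') ?_ hg
  fun_prop (disch := exact fun y hy => (pow_pos (hpos y hy) 2).ne')

end Substitution

section Integrands

variable {q r x y : ℝ}

theorem continuousOn_exp_mul_inv_add_sqrt_sq (q r : ℝ) :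
    ContinuousOn (fun u => exp (-q * u ^ 2) * ((u + √(u ^ 2 - 4 * r)) ^ 2)⁻¹) (Set.Ioi 0) := by
  refine (by fun_prop : Continuous _).continuousOn.mul (ContinuousOn.inv₀ (by fun_prop) ?_)
  exact fun u (hu : 0 < u) => by positivity

theorem neg_lt_sqrt_sq_add (x : ℝ) (hr : 0 < r) : -x < √(x ^ 2 + r) :=
  calc -x ≤ |x| := neg_le_abs x
    _ = √(x ^ 2) := (sqrt_sq_eq_abs x).symm
    _ < √(x ^ 2 + r) := sqrt_lt_sqrt (sq_nonneg x) (lt_add_of_pos_right _ hr)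

theorem continuous_exp_mul_inv_sqrt_sq_add (q : ℝ) (hr : 0 < r) :
    Continuous (fun x => exp (-q * x ^ 2) * ((√(x ^ 2 + 4 * r) + x) ^ 2)⁻¹) := by
  refine (by fun_prop : Continuous _).mul (Continuous.inv₀ (by fun_prop) fun x => ?_)
  exact pow_ne_zero 2 (neg_lt_iff_pos_add.mp (neg_lt_sqrt_sq_add x (by positivity))).ne'

theorem sqrt_sq_add_div_sub (hy : 0 < y) (hry : r ≤ y ^ 2) :
    √((y + r / y) ^ 2 - 4 * r) = y - r / y := by
  have hsq : (y + r / y) ^ 2 - 4 * r = (y - r / y) ^ 2 := by field_simp; ring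
  have hle : r / y ≤ y := by rw [div_le_iff₀ hy]; nlinarith
  rw [hsq, sqrt_sq (sub_nonneg.mpr hle)]

theorem sqrt_sq_sub_div_add (hy : 0 < y) (hr : 0 ≤ r) :
    √((y - r / y) ^ 2 + 4 * r) = y + r / y := by
  have hsq : (y - r / y) ^ 2 + 4 * r = (y + r / y) ^ 2 := by field_simp; ring
  rw [hsq, sqrt_sq (by positivity)]

theorem exp_mul_exp_neg_mul_add_div_sq (q : ℝ) (hy : y ≠ 0) :
    exp (2 * q * r) * exp (-q * (y + r / y) ^ 2) = exp (-q * (y ^ 2 + r ^ 2 / y ^ 2)) := by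
  rw [← exp_add]; congr 1; field_simp; ring

theorem exp_mul_exp_neg_mul_sub_div_sq (q : ℝ) (hy : y ≠ 0) :
    exp (-(2 * q * r)) * exp (-q * (y - r / y) ^ 2) = exp (-q * (y ^ 2 + r ^ 2 / y ^ 2)) := by
  rw [← exp_add]; congr 1; field_simp; ring

theorem exp_mul_exp_mul_inv_add_sqrt_sq (q : ℝ) (hy : 0 < y) (hry : r ≤ y ^ 2) :
    exp (2 * q * r) *
        (exp (-q * (y + r / y) ^ 2) * ((y + r / y + √((y + r / y) ^ 2 - 4 * r)) ^ 2)⁻¹)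
      = ((2 * y) ^ 2)⁻¹ * exp (-q * (y ^ 2 + r ^ 2 / y ^ 2)) := by
  rw [sqrt_sq_add_div_sub hy hry, ← mul_assoc, exp_mul_exp_neg_mul_add_div_sq q hy.ne']
  ring

theorem exp_mul_exp_mul_inv_sqrt_sq_add (q : ℝ) (hy : 0 < y) (hr : 0 ≤ r) :
    exp (-(2 * q * r)) *
        (exp (-q * (y - r / y) ^ 2) * ((√((y - r / y) ^ 2 + 4 * r) + (y - r / y)) ^ 2)⁻¹)
      = ((2 * y) ^ 2)⁻¹ * exp (-q * (y ^ 2 + r ^ 2 / y ^ 2)) := by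
  rw [sqrt_sq_sub_div_add hy hr, ← mul_assoc, exp_mul_exp_neg_mul_sub_div_sq q hy.ne']
  ring

end Integrands

theorem binet_integral_general (A B q r : ℝ)
    (hA : 0 < A) (hAB : A < B) (hr : 0 < r) (hrA : Real.sqrt r ≤ A) :
    (∫ y in A..B, (y ^ 2)⁻¹ * Real.exp (-q * (y ^ 2 + r ^ 2 / y ^ 2)))
      = 2 * Real.exp (2 * q * r) *
          (∫ u in (A + r / A)..(B + r / B),
            Real.exp (-q * u ^ 2) * ((u + Real.sqrt (u ^ 2 - 4 * r)) ^ 2)⁻¹)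
        + 2 * Real.exp (-(2 * q * r)) *
          (∫ x in (A - r / A)..(B - r / B),
            Real.exp (-q * x ^ 2) * ((Real.sqrt (x ^ 2 + 4 * r) + x) ^ 2)⁻¹) := by
  have hB : 0 < B := hA.trans hAB
  have hpos : ∀ y ∈ Set.uIcc A B, 0 < y := fun y hy => pos_of_mem_uIcc hA hB hy
  have hry : ∀ y ∈ Set.uIcc A B, r ≤ y ^ 2 := fun y hy =>
    (sqrt_le_iff.mp (hrA.trans (Set.uIcc_of_le hAB.le ▸ hy).1)).2
  set K : ℝ → ℝ := fun y => ((2 * y) ^ 2)⁻¹ * exp (-q * (y ^ 2 + r ^ 2 / y ^ 2)) with hK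
  calc
    _ = ∫ y in A..B, 2 * (1 - r / y ^ 2) * K y + 2 * (1 + r / y ^ 2) * K y :=
      intervalIntegral.integral_congr fun y hy => by
        have := (hpos y hy).ne'
        simp only [hK]; field_simp; ring
    _ = (∫ y in A..B, 2 * (1 - r / y ^ 2) * K y) + ∫ y in A..B, 2 * (1 + r / y ^ 2) * K y := by
      apply intervalIntegral.integral_add <;> apply ContinuousOn.intervalIntegrable <;>
        fun_prop (disch := (intro y (hy : y ∈ Set.uIcc A B); have := hpos y hy; positivity))
    _ = _ := by
      congr 1
      · rw [← intervalIntegral.integral_comp_add_div_mul hA hB hr.le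
            (continuousOn_exp_mul_inv_add_sqrt_sq q r), ← intervalIntegral.integral_const_mul]
        refine intervalIntegral.integral_congr fun y hy => ?_
        simp only [hK]
        rw [← exp_mul_exp_mul_inv_add_sqrt_sq q (hpos y hy) (hry y hy)]
        ring
      · rw [← intervalIntegral.integral_comp_sub_div_mul hA hB
            (continuous_exp_mul_inv_sqrt_sq_add q hr), ← intervalIntegral.integral_const_mul]
        refine intervalIntegral.integral_congr fun y hy => ?_
        simp only [hK]
        rw [← exp_mul_exp_mul_inv_sqrt_sq_add q (hpos y hy) hr.le]
        ring

/-- Binet's integral identity: for `0 < A < B`, `q > 0`, `r > 0` with `√r ≤ A`,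
`∫_A^B y⁻² e^{−q(y² + r²/y²)} dy` splits, via the substitutions `u = y + r/y` and
`x = y − r/y`, into the two integrals on the right-hand side. -/
theorem binet_integral (A B q r : ℝ)
    (hA : 0 < A) (hAB : A < B) (hq : 0 < q) (hr : 0 < r) (hrA : Real.sqrt r ≤ A) :
    (∫ y in A..B, (y ^ 2)⁻¹ * Real.exp (-q * (y ^ 2 + r ^ 2 / y ^ 2)))
      = 2 * Real.exp (2 * q * r) *
          (∫ u in (A + r / A)..(B + r / B),
            Real.exp (-q * u ^ 2) * ((u + Real.sqrt (u ^ 2 - 4 * r)) ^ 2)⁻¹)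
        + 2 * Real.exp (-(2 * q * r)) *
          (∫ x in (A - r / A)..(B - r / B),
            Real.exp (-q * x ^ 2) * ((Real.sqrt (x ^ 2 + 4 * r) + x) ^ 2)⁻¹) :=
  binet_integral_general A B q r hA hAB hr hrA
end
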